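/- arXiv:1305.3177 — 2 statements merged into one kernel-verified Lean document; each statement's English description precedes it below -/
import Mathlib

section
/- For every positive integer n, ∑_{P∈D_n} ∑_{j∈J_{UUD}(P)} y(j) = ∑_{P∈D_n} ∑_{j∈J_{UDU}(P)} y(j), where D_n is the set of Dyck paths of semilength n, J_{UUD}(P) (respectively J_{UDU}(P)) is the set of positions j such that steps j, j+1, j+2 of P form the string UUD (respectively UDU), and y(j) is the y-coordinate of the leftmost point of the j-th step of P. -/
open Finset

/-- A Dyck path of semilength `n`, encoded as a function `Fin (2*n) → Bool` where
`true` is a `U = (1,1)` step and `false` is a `D = (1,-1)` step: it has exactly `n`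
up-steps (hence ends at `(2n, 0)`), and every prefix has at least as many up-steps
as down-steps (it never goes below the x-axis). -/
def IsDyck (n : ℕ) (P : Fin (2 * n) → Bool) : Prop :=
  (univ.filter fun i : Fin (2 * n) => P i = true).card = n ∧
  ∀ k : ℕ, k ≤ 2 * n →
    (univ.filter fun i : Fin (2 * n) => (i : ℕ) < k ∧ P i = false).card ≤
      (univ.filter fun i : Fin (2 * n) => (i : ℕ) < k ∧ P i = true).card

instance (n : ℕ) : DecidablePred (IsDyck n) := fun P => by
  unfold IsDyck; infer_instance

/-- The y-coordinate of the leftmost point of step `j` (0-indexed) of the path `P`: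
the number of up-steps minus the number of down-steps among the steps before `j`. -/
def ht (n : ℕ) (P : Fin (2 * n) → Bool) (j : Fin (2 * n)) : ℤ :=
  ((univ.filter fun i : Fin (2 * n) => i < j ∧ P i = true).card : ℤ) -
    ((univ.filter fun i : Fin (2 * n) => i < j ∧ P i = false).card : ℤ)

/-- The sum, over all occurrences of `UUD` in `P` (triples of consecutive positions
`(j, j+1, j+2)` whose steps are `U`, `U`, `D`), of the height `y(j)` of the leftmost
point of the first step of the occurrence. -/
def uudSum (n : ℕ) (P : Fin (2 * n) → Bool) : ℤ :=
  ∑ t ∈ univ.filter (fun t : Fin (2 * n) × Fin (2 * n) × Fin (2 * n) =>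
      (t.2.1 : ℕ) = (t.1 : ℕ) + 1 ∧ (t.2.2 : ℕ) = (t.1 : ℕ) + 2 ∧
      P t.1 = true ∧ P t.2.1 = true ∧ P t.2.2 = false),
    ht n P t.1

/-- The analogous sum over all occurrences of `UDU` in `P`. -/
def uduSum (n : ℕ) (P : Fin (2 * n) → Bool) : ℤ :=
  ∑ t ∈ univ.filter (fun t : Fin (2 * n) × Fin (2 * n) × Fin (2 * n) =>
      (t.2.1 : ℕ) = (t.1 : ℕ) + 1 ∧ (t.2.2 : ℕ) = (t.1 : ℕ) + 2 ∧
      P t.1 = true ∧ P t.2.1 = false ∧ P t.2.2 = true),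
    ht n P t.1

lemma card_filter_comp_perm {m : ℕ} (σ : Equiv.Perm (Fin m)) (p : Fin m → Prop)
    [DecidablePred p] :
    (univ.filter fun i => p (σ i)).card = (univ.filter fun i => p i).card := by
  apply Finset.card_bij' (fun i _ => σ i) (fun i _ => σ.symm i) <;> simp

lemma filter_swap_small {m : ℕ} (P : Fin m → Bool) (b c : Fin m) (q : Fin m → Prop)
    [DecidablePred q] (h : ∀ i, q i → i ≠ b ∧ i ≠ c) (v : Bool) :
    (univ.filter fun i => q i ∧ P (Equiv.swap b c i) = v)
      = univ.filter fun i => q i ∧ P i = v := by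
  refine Finset.filter_congr fun i _ => ?_
  by_cases hq : q i
  · rw [Equiv.swap_apply_of_ne_of_ne (h i hq).1 (h i hq).2]
  · simp [hq]

lemma card_filter_swap_large {m : ℕ} (P : Fin m → Bool) (b c : Fin m) (k : ℕ)
    (hb : (b : ℕ) < k) (hc : (c : ℕ) < k) (v : Bool) :
    (univ.filter fun i : Fin m => (i : ℕ) < k ∧ P (Equiv.swap b c i) = v).card
      = (univ.filter fun i : Fin m => (i : ℕ) < k ∧ P i = v).card := by
  have heq : (univ.filter fun i : Fin m => (i : ℕ) < k ∧ P (Equiv.swap b c i) = v)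
      = univ.filter fun i : Fin m =>
          ((Equiv.swap b c i : Fin m) : ℕ) < k ∧ P (Equiv.swap b c i) = v := by
    refine Finset.filter_congr fun i _ => ?_
    have hiff : ((Equiv.swap b c i : Fin m) : ℕ) < k ↔ (i : ℕ) < k := by
      rcases eq_or_ne i b with rfl | h1
      · simp [Equiv.swap_apply_left, hb, hc]
      rcases eq_or_ne i c with rfl | h2
      · simp [Equiv.swap_apply_right, hb, hc]
      · rw [Equiv.swap_apply_of_ne_of_ne h1 h2]
    rw [hiff]
  rw [heq]
  exact card_filter_comp_perm (Equiv.swap b c) (fun i => (i : ℕ) < k ∧ P i = v)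

lemma cnt_succ {m : ℕ} (P : Fin m → Bool) (v : Bool) (k : ℕ) (hk : k < m) :
    (univ.filter fun i : Fin m => (i : ℕ) < k + 1 ∧ P i = v).card
      = (univ.filter fun i : Fin m => (i : ℕ) < k ∧ P i = v).card
        + (if P ⟨k, hk⟩ = v then 1 else 0) := by
  have hsplit : (univ.filter fun i : Fin m => (i : ℕ) < k + 1 ∧ P i = v)
      = (univ.filter fun i : Fin m => (i : ℕ) < k ∧ P i = v)
        ∪ (univ.filter fun i : Fin m => i = ⟨k, hk⟩ ∧ P i = v) := by
    ext i
    simp only [mem_filter, mem_union, mem_univ, true_and, Fin.ext_iff]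
    constructor
    · rintro ⟨h1, h2⟩
      rcases Nat.lt_or_ge (i : ℕ) k with h | h
      · exact Or.inl ⟨h, h2⟩
      · exact Or.inr ⟨by omega, h2⟩
    · rintro (⟨h1, h2⟩ | ⟨h1, h2⟩) <;> exact ⟨by omega, h2⟩
  rw [hsplit, card_union_of_disjoint]
  · congr 1
    by_cases hv : P ⟨k, hk⟩ = v
    · rw [if_pos hv]
      rw [show (univ.filter fun i : Fin m => i = ⟨k, hk⟩ ∧ P i = v) = {⟨k, hk⟩} from ?_]
      · simp
      · ext i; simp only [mem_filter, mem_univ, true_and, mem_singleton]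
        constructor
        · rintro ⟨rfl, _⟩; rfl
        · rintro rfl; exact ⟨rfl, hv⟩
    · rw [if_neg hv]
      rw [show (univ.filter fun i : Fin m => i = ⟨k, hk⟩ ∧ P i = v) = ∅ from ?_]
      · simp
      · ext i; simp only [mem_filter, mem_univ, true_and, notMem_empty, iff_false]
        rintro ⟨rfl, h⟩; exact hv h
  · rw [Finset.disjoint_left]
    rintro i hi hi'
    simp only [mem_filter, mem_univ, true_and] at hi hi'
    have := hi.1; rw [hi'.1] at this; simp at this

lemma isDyck_swap (n : ℕ) (P : Fin (2 * n) → Bool) (hP : IsDyck n P)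
    (a b c : Fin (2 * n)) (hb : (b : ℕ) = (a : ℕ) + 1) (hc : (c : ℕ) = (a : ℕ) + 2)
    (ha : P a = true) :
    IsDyck n (P ∘ (Equiv.swap b c)) := by
  constructor
  · have h := card_filter_comp_perm (Equiv.swap b c) (fun i => P i = true)
    simp only [Function.comp_apply]
    exact h.trans hP.1
  · intro k hk
    simp only [Function.comp_apply]
    by_cases h1 : k ≤ (a : ℕ) + 1
    · have hsm : ∀ i : Fin (2 * n), (i : ℕ) < k → i ≠ b ∧ i ≠ c := by
        intro i hi
        constructor <;> intro rfl <;> omega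
      rw [filter_swap_small P b c _ hsm false, filter_swap_small P b c _ hsm true]
      exact hP.2 k hk
    by_cases h2 : k = (a : ℕ) + 2
    · subst h2
      have han : (a : ℕ) < 2 * n := a.isLt
      have han1 : (a : ℕ) + 1 < 2 * n := by omega
      have hbf : b = ⟨(a : ℕ) + 1, han1⟩ := Fin.ext hb
      have haf : (⟨(a : ℕ), han⟩ : Fin (2 * n)) = a := Fin.ext rfl
      have hsm : ∀ i : Fin (2 * n), (i : ℕ) < (a : ℕ) + 1 → i ≠ b ∧ i ≠ c := by
        intro i hi; constructor <;> intro rfl <;> omega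
      have key : ∀ v : Bool,
          (univ.filter fun i : Fin (2 * n) => (i : ℕ) < (a : ℕ) + 2 ∧ P (Equiv.swap b c i) = v).card
            = (univ.filter fun i : Fin (2 * n) => (i : ℕ) < (a : ℕ) ∧ P i = v).card
              + (if P a = v then 1 else 0) + (if P c = v then 1 else 0) := by
        intro v
        rw [show (a : ℕ) + 2 = ((a : ℕ) + 1) + 1 from rfl,
          cnt_succ (fun i => P (Equiv.swap b c i)) v ((a : ℕ) + 1) han1,
          filter_swap_small P b c _ hsm v, cnt_succ P v (a : ℕ) han, haf]
        rw [← hbf, Equiv.swap_apply_left]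
      rw [key false, key true, ha]
      have h0 := hP.2 (a : ℕ) (by omega)
      simp only [Fin.val_fin_lt] at h0
      rcases Bool.eq_false_or_eq_true (P c) with h | h <;> simp [h] <;> omega
    · have h3 : (a : ℕ) + 2 < k := by omega
      rw [card_filter_swap_large P b c k (by omega) (by omega) false,
        card_filter_swap_large P b c k (by omega) (by omega) true]
      exact hP.2 k hk

lemma ht_swap (n : ℕ) (P : Fin (2 * n) → Bool) (a b c : Fin (2 * n))
    (hb : (b : ℕ) = (a : ℕ) + 1) (hc : (c : ℕ) = (a : ℕ) + 2) :
    ht n (P ∘ (Equiv.swap b c)) a = ht n P a := by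
  unfold ht
  have hsm : ∀ i : Fin (2 * n), i < a → i ≠ b ∧ i ≠ c := by
    intro i hi
    rw [Fin.lt_def] at hi
    constructor <;> intro rfl <;> omega
  simp only [Function.comp_apply]
  rw [filter_swap_small P b c _ hsm false, filter_swap_small P b c _ hsm true]

lemma swap_swap_comp {m : ℕ} (P : Fin m → Bool) (b c : Fin m) :
    (P ∘ (Equiv.swap b c)) ∘ (Equiv.swap b c) = P := by
  funext i
  simp [Function.comp, Equiv.swap_apply_self]


/-- Over all Dyck paths of semilength `n`, the total height-weighted count of
occurrences of `UUD` equals that of `UDU`. -/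
theorem sum_uud_heights_eq_sum_udu_heights (n : ℕ) (hn : 0 < n) :
    ∑ P ∈ univ.filter (IsDyck n), uudSum n P =
      ∑ P ∈ univ.filter (IsDyck n), uduSum n P := by
  classical
  have key : ∀ a b c : Fin (2 * n),
      ∑ P ∈ univ.filter (fun P : Fin (2 * n) → Bool => IsDyck n P ∧
          ((b : ℕ) = (a : ℕ) + 1 ∧ (c : ℕ) = (a : ℕ) + 2 ∧
            P a = true ∧ P b = true ∧ P c = false)), ht n P a
        = ∑ P ∈ univ.filter (fun P : Fin (2 * n) → Bool => IsDyck n P ∧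
          ((b : ℕ) = (a : ℕ) + 1 ∧ (c : ℕ) = (a : ℕ) + 2 ∧
            P a = true ∧ P b = false ∧ P c = true)), ht n P a := by
    intro a b c
    by_cases hbc : (b : ℕ) = (a : ℕ) + 1 ∧ (c : ℕ) = (a : ℕ) + 2
    · obtain ⟨hb, hc⟩ := hbc
      have hab : a ≠ b := by intro h; rw [h] at hb; omega
      have hac : a ≠ c := by intro h; rw [h] at hc; omega
      have hswa : ∀ P : Fin (2 * n) → Bool, (P ∘ (Equiv.swap b c)) a = P a := by
        intro P
        simp only [Function.comp_apply]
        rw [Equiv.swap_apply_of_ne_of_ne hab hac]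
      refine Finset.sum_nbij' (fun P => P ∘ (Equiv.swap b c)) (fun P => P ∘ (Equiv.swap b c))
        ?_ ?_ ?_ ?_ ?_
      · intro P hP
        simp only [mem_filter, mem_univ, true_and] at hP ⊢
        obtain ⟨hd, _, _, h1, h2, h3⟩ := hP
        refine ⟨isDyck_swap n P hd a b c hb hc h1, hb, hc, (hswa P).trans h1, ?_, ?_⟩
        · simp only [Function.comp_apply, Equiv.swap_apply_left]; exact h3
        · simp only [Function.comp_apply, Equiv.swap_apply_right]; exact h2
      · intro P hP
        simp only [mem_filter, mem_univ, true_and] at hP ⊢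
        obtain ⟨hd, _, _, h1, h2, h3⟩ := hP
        refine ⟨isDyck_swap n P hd a b c hb hc h1, hb, hc, (hswa P).trans h1, ?_, ?_⟩
        · simp only [Function.comp_apply, Equiv.swap_apply_left]; exact h3
        · simp only [Function.comp_apply, Equiv.swap_apply_right]; exact h2
      · intro P _; exact swap_swap_comp P b c
      · intro P _; exact swap_swap_comp P b c
      · intro P _
        exact (ht_swap n P a b c hb hc).symm
    · rw [Finset.filter_false_of_mem, Finset.filter_false_of_mem]
      · intro P _
        rintro ⟨_, h1, h2, _⟩
        exact hbc ⟨h1, h2⟩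
      · intro P _
        rintro ⟨_, h1, h2, _⟩
        exact hbc ⟨h1, h2⟩
  unfold uudSum uduSum
  rw [show (∑ P ∈ univ.filter (IsDyck n),
      ∑ t ∈ univ.filter (fun t : Fin (2 * n) × Fin (2 * n) × Fin (2 * n) =>
        (t.2.1 : ℕ) = (t.1 : ℕ) + 1 ∧ (t.2.2 : ℕ) = (t.1 : ℕ) + 2 ∧
        P t.1 = true ∧ P t.2.1 = true ∧ P t.2.2 = false), ht n P t.1)
    = ∑ t : Fin (2 * n) × Fin (2 * n) × Fin (2 * n),
        ∑ P ∈ univ.filter (fun P : Fin (2 * n) → Bool => IsDyck n P ∧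
          ((t.2.1 : ℕ) = (t.1 : ℕ) + 1 ∧ (t.2.2 : ℕ) = (t.1 : ℕ) + 2 ∧
            P t.1 = true ∧ P t.2.1 = true ∧ P t.2.2 = false)), ht n P t.1 from ?_,
    show (∑ P ∈ univ.filter (IsDyck n),
      ∑ t ∈ univ.filter (fun t : Fin (2 * n) × Fin (2 * n) × Fin (2 * n) =>
        (t.2.1 : ℕ) = (t.1 : ℕ) + 1 ∧ (t.2.2 : ℕ) = (t.1 : ℕ) + 2 ∧
        P t.1 = true ∧ P t.2.1 = false ∧ P t.2.2 = true), ht n P t.1)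
    = ∑ t : Fin (2 * n) × Fin (2 * n) × Fin (2 * n),
        ∑ P ∈ univ.filter (fun P : Fin (2 * n) → Bool => IsDyck n P ∧
          ((t.2.1 : ℕ) = (t.1 : ℕ) + 1 ∧ (t.2.2 : ℕ) = (t.1 : ℕ) + 2 ∧
            P t.1 = true ∧ P t.2.1 = false ∧ P t.2.2 = true)), ht n P t.1 from ?_]
  · exact Finset.sum_congr rfl fun t _ => key t.1 t.2.1 t.2.2
  · simp only [Finset.sum_filter (s := (univ : Finset (Fin (2 * n) × Fin (2 * n) × Fin (2 * n))))]
    rw [Finset.sum_comm]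
    refine Finset.sum_congr rfl fun t _ => ?_
    rw [← Finset.sum_filter, Finset.filter_filter]
  · simp only [Finset.sum_filter (s := (univ : Finset (Fin (2 * n) × Fin (2 * n) × Fin (2 * n))))]
    rw [Finset.sum_comm]
    refine Finset.sum_congr rfl fun t _ => ?_
    rw [← Finset.sum_filter, Finset.filter_filter]
end

section
/- As formal power series over ℚ, the five series ∑_{n≥0}(3-21)S_n(2-3-1) z^n, ∑_{n≥0}(3-12)S_n(2-3-1) z^n, ∑_{n≥0}(32-1)S_n(2-3-1) z^n, ∑_{n≥0}(31-2)S_n(2-3-1) z^n, and ∑_{n≥0}(13-2)S_n(2-3-1) z^n are all equal to z^3 B(z)^2 C(z)^4; moreover ∑_{n≥0}(1-32)S_n(2-3-1) z^n = z^3 B(z)^3 C(z)^3. -/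
open Finset

/-- The set of 2-3-1-avoiding permutations of `{1,...,n}` (encoded via `Fin n`):
no indices `i < j < k` with `π k < π i < π j`. -/
def avoid231 (n : ℕ) : Finset (Equiv.Perm (Fin n)) :=
  univ.filter fun π => ∀ i j k : Fin n, i < j → j < k → ¬(π k < π i ∧ π i < π j)

/-- `B(z) = ∑ binom(2n,n) zⁿ` as a formal power series over `ℚ`. -/
noncomputable def Bq : PowerSeries ℚ :=
  PowerSeries.mk fun n => (Nat.choose (2 * n) n : ℚ)

/-- `C(z) = ∑ Catalan(n) zⁿ` as a formal power series over `ℚ`. -/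
noncomputable def Cq : PowerSeries ℚ :=
  PowerSeries.mk fun n => (catalan n : ℚ)

/-- Occurrences of 3-21 in `π`: triples `(i, j, j')` with `i < j`, `j' = j+1` and
`π j' < π j < π i`. -/
def occ3d21 {n : ℕ} (π : Equiv.Perm (Fin n)) : ℕ :=
  (univ.filter fun t : Fin n × Fin n × Fin n =>
    t.1 < t.2.1 ∧ (t.2.2 : ℕ) = (t.2.1 : ℕ) + 1 ∧
    π t.2.2 < π t.2.1 ∧ π t.2.1 < π t.1).card

/-- Occurrences of 3-12 in `π`: triples `(i, j, j')` with `i < j`, `j' = j+1` and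
`π j < π j' < π i`. -/
def occ3d12 {n : ℕ} (π : Equiv.Perm (Fin n)) : ℕ :=
  (univ.filter fun t : Fin n × Fin n × Fin n =>
    t.1 < t.2.1 ∧ (t.2.2 : ℕ) = (t.2.1 : ℕ) + 1 ∧
    π t.2.1 < π t.2.2 ∧ π t.2.2 < π t.1).card

/-- Occurrences of 32-1 in `π`: triples `(i, i', j)` with `i' = i+1 < j` and
`π j < π i' < π i`. -/
def occ32d1 {n : ℕ} (π : Equiv.Perm (Fin n)) : ℕ :=
  (univ.filter fun t : Fin n × Fin n × Fin n =>
    (t.2.1 : ℕ) = (t.1 : ℕ) + 1 ∧ t.2.1 < t.2.2 ∧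
    π t.2.2 < π t.2.1 ∧ π t.2.1 < π t.1).card

/-- Occurrences of 31-2 in `π`: triples `(i, i', j)` with `i' = i+1 < j` and
`π i' < π j < π i`. -/
def occ31d2 {n : ℕ} (π : Equiv.Perm (Fin n)) : ℕ :=
  (univ.filter fun t : Fin n × Fin n × Fin n =>
    (t.2.1 : ℕ) = (t.1 : ℕ) + 1 ∧ t.2.1 < t.2.2 ∧
    π t.2.1 < π t.2.2 ∧ π t.2.2 < π t.1).card

/-- Occurrences of 13-2 in `π`: triples `(i, i', j)` with `i' = i+1 < j` and
`π i < π j < π i'`. -/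
def occ13d2 {n : ℕ} (π : Equiv.Perm (Fin n)) : ℕ :=
  (univ.filter fun t : Fin n × Fin n × Fin n =>
    (t.2.1 : ℕ) = (t.1 : ℕ) + 1 ∧ t.2.1 < t.2.2 ∧
    π t.1 < π t.2.2 ∧ π t.2.2 < π t.2.1).card

/-- Occurrences of 1-32 in `π`: triples `(i, j, j')` with `i < j`, `j' = j+1` and
`π i < π j' < π j`. -/
def occ1d32 {n : ℕ} (π : Equiv.Perm (Fin n)) : ℕ :=
  (univ.filter fun t : Fin n × Fin n × Fin n =>
    t.1 < t.2.1 ∧ (t.2.2 : ℕ) = (t.2.1 : ℕ) + 1 ∧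
    π t.1 < π t.2.2 ∧ π t.2.2 < π t.2.1).card

/-!
A 231-avoiding permutation of size `n + 1` is `σ n τ` with `σ`, `τ` 231-avoiding and every entry
of `σ` below every entry of `τ`. Each pattern count, and each auxiliary statistic (descents,
ascents, entries after the first one that are smaller or larger than it), is additive under this
factorisation up to a correction term that is a product of a weight of `σ` and a weight of `τ`.
Summing over all factorisations, the generating functions satisfy `S = z (S C + C S + R)` or
`S = z (S C + R)`, solved by `S = z B R` resp. `S = z C R`: indeed `C = 1 + z C²`, and
`B (1 - 2 z C) = 1` because `B` is the generating function of the weight `n + 1`, as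
`(n + 1) Cat_n = binom(2n, n)`.
-/

open Equiv PowerSeries

lemma PowerSeries.eq_of_eq_one_add_X_mul_sq {R : Type*} [CommRing R] [IsDomain R] {F G : R⟦X⟧}
    (hF : F = 1 + X * F ^ 2) (hG : G = 1 + X * G ^ 2) : F = G := by
  have h : (F - G) * (1 - X * (F + G)) = 0 := by linear_combination hF - hG
  have hu : (1 - X * (F + G) : R⟦X⟧) ≠ 0 := fun h0 => by
    simpa using congrArg constantCoeff h0
  exact sub_eq_zero.1 ((mul_eq_zero.1 h).resolve_right hu)

lemma Cq_eq_one_add_X_mul_sq : Cq = 1 + X * Cq ^ 2 := by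
  ext (_ | n)
  · simp [Cq]
  · rw [map_add, coeff_succ_X_mul, sq, coeff_mul]
    simp [Cq, catalan_succ']

namespace Avoid231

variable {n k : ℕ}

/- In `join hk σ τ = σ n τ` the block `σ` occupies positions and values `[0, k)` (`posL`), the
maximum `n` sits at position `k` (`posM`), and the block `τ` occupies positions `(k, n]` (`posR`)
and values `[k, n)` (`valR`). -/
def posL (hk : k ≤ n) (a : Fin k) : Fin (n + 1) := ⟨a, by omega⟩
def posM (hk : k ≤ n) : Fin (n + 1) := ⟨k, by omega⟩
def posR (hk : k ≤ n) (c : Fin (n - k)) : Fin (n + 1) := ⟨k + 1 + c, by omega⟩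
def valR (hk : k ≤ n) (c : Fin (n - k)) : Fin (n + 1) := ⟨k + c, by omega⟩

section Regions

variable (hk : k ≤ n) {a b : Fin k} {c d : Fin (n - k)}

@[grind =] lemma val_posL : (posL hk a : ℕ) = a := rfl
@[grind =] lemma val_posM : (posM hk : ℕ) = k := rfl
@[grind =] lemma val_posR : (posR hk c : ℕ) = k + 1 + c := rfl
@[grind =] lemma val_valR : (valR hk c : ℕ) = k + c := rfl

@[simp] lemma posL_lt_posL : posL hk a < posL hk b ↔ a < b := Iff.rfl
@[simp] lemma posL_le_posL : posL hk a ≤ posL hk b ↔ a ≤ b := Iff.rfl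
@[simp] lemma posR_lt_posR : posR hk c < posR hk d ↔ c < d := by grind
@[simp] lemma valR_lt_valR : valR hk c < valR hk d ↔ c < d := by grind
@[simp] lemma valR_le_valR : valR hk c ≤ valR hk d ↔ c ≤ d := by grind
@[simp] lemma posL_lt_posM : posL hk a < posM hk := by grind
@[simp] lemma posL_lt_posR : posL hk a < posR hk c := by grind
@[simp] lemma posM_lt_posR : posM hk < posR hk c := by grind
@[simp] lemma posL_lt_valR : posL hk a < valR hk c := by grind
@[simp] lemma posL_lt_last : posL hk a < Fin.last n := by grind
@[simp] lemma valR_lt_last : valR hk c < Fin.last n := by grind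
@[simp] lemma not_posM_lt_posL : ¬posM hk < posL hk a := by grind
@[simp] lemma not_posR_lt_posL : ¬posR hk c < posL hk a := by grind
@[simp] lemma not_posR_lt_posM : ¬posR hk c < posM hk := by grind
@[simp] lemma not_valR_lt_posL : ¬valR hk c < posL hk a := by grind
@[simp] lemma not_last_lt_posL : ¬Fin.last n < posL hk a := by grind
@[simp] lemma not_last_lt_valR : ¬Fin.last n < valR hk c := by grind

@[simp] lemma val_posL_eq_val_posL_add_one : (posL hk b : ℕ) = posL hk a + 1 ↔ (b : ℕ) = a + 1 :=
  Iff.rfl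
@[simp] lemma val_posM_eq_val_posL_add_one : (posM hk : ℕ) = posL hk a + 1 ↔ k = a + 1 := Iff.rfl
@[simp] lemma val_posR_eq_val_posM_add_one : (posR hk c : ℕ) = posM hk + 1 ↔ (c : ℕ) = 0 := by
  grind
@[simp] lemma val_posR_eq_val_posR_add_one : (posR hk d : ℕ) = posR hk c + 1 ↔ (d : ℕ) = c + 1 := by
  grind
@[simp] lemma val_posL_ne_val_posM_add_one : ¬(posL hk a : ℕ) = posM hk + 1 := by grind
@[simp] lemma val_posL_ne_val_posR_add_one : ¬(posL hk a : ℕ) = posR hk c + 1 := by grind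
@[simp] lemma val_posM_ne_val_posR_add_one : ¬(posM hk : ℕ) = posR hk c + 1 := by grind
@[simp] lemma val_posR_ne_val_posL_add_one : ¬(posR hk c : ℕ) = posL hk a + 1 := by grind
@[simp] lemma posL_eq_zero : posL hk a = 0 ↔ (a : ℕ) = 0 := by grind
@[simp] lemma posM_eq_zero : posM hk = 0 ↔ k = 0 := by grind
@[simp] lemma posR_ne_zero : posR hk c ≠ 0 := Fin.ne_of_val_ne (by rw [val_posR]; simp)

lemma posL_strictMono : StrictMono (posL hk) := fun _ _ h => h

lemma posR_strictMono : StrictMono (posR hk) := fun _ _ h => (posR_lt_posR hk).2 h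

end Regions

def posEquiv (hk : k ≤ n) : Fin k ⊕ Fin 1 ⊕ Fin (n - k) ≃ Fin (n + 1) :=
  (sumCongr (Equiv.refl _) finSumFinEquiv).trans (finSumFinEquiv.trans (finCongr (by omega)))

def valEquiv (hk : k ≤ n) : Fin k ⊕ Fin 1 ⊕ Fin (n - k) ≃ Fin (n + 1) :=
  (sumCongr (Equiv.refl _) ((sumComm _ _).trans finSumFinEquiv)).trans
    (finSumFinEquiv.trans (finCongr (by omega)))

lemma posEquiv_inl (hk : k ≤ n) (a : Fin k) : posEquiv hk (.inl a) = posL hk a := rfl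

lemma posEquiv_inr_inl (hk : k ≤ n) (u : Fin 1) : posEquiv hk (.inr (.inl u)) = posM hk := by
  rw [Subsingleton.elim u 0]; rfl

lemma posEquiv_inr_inr (hk : k ≤ n) (c : Fin (n - k)) :
    posEquiv hk (.inr (.inr c)) = posR hk c :=
  Fin.ext (Nat.add_assoc _ _ _).symm

lemma valEquiv_inr_inl (hk : k ≤ n) : valEquiv hk (.inr (.inl 0)) = Fin.last n :=
  Fin.ext (Nat.add_sub_cancel' hk)

def join (hk : k ≤ n) (σ : Perm (Fin k)) (τ : Perm (Fin (n - k))) : Perm (Fin (n + 1)) :=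
  (posEquiv hk).symm.trans ((sumCongr σ (sumCongr (Equiv.refl _) τ)).trans (valEquiv hk))

section Join

variable (hk : k ≤ n) (σ : Perm (Fin k)) (τ : Perm (Fin (n - k)))

@[simp] lemma join_posL (a : Fin k) : join hk σ τ (posL hk a) = posL hk (σ a) := by
  rw [← posEquiv_inl, join, trans_apply, trans_apply, symm_apply_apply]; rfl

@[simp] lemma join_posM : join hk σ τ (posM hk) = Fin.last n := by
  rw [← posEquiv_inr_inl hk 0, join, trans_apply, trans_apply, symm_apply_apply]
  exact valEquiv_inr_inl hk

@[simp] lemma join_posR (c : Fin (n - k)) : join hk σ τ (posR hk c) = valR hk (τ c) := by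
  rw [← posEquiv_inr_inr, join, trans_apply, trans_apply, symm_apply_apply]; rfl

lemma join_symm_apply_last : (join hk σ τ).symm (Fin.last n) = posM hk :=
  (Equiv.symm_apply_eq _).2 (join_posM hk σ τ).symm

end Join

lemma sum_fin_succ_eq_sum_regions {M : Type*} [AddCommMonoid M] (hk : k ≤ n)
    (f : Fin (n + 1) → M) :
    ∑ i, f i = ∑ a, f (posL hk a) + f (posM hk) + ∑ c, f (posR hk c) := by
  rw [← (posEquiv hk).sum_comp]
  simp [Fintype.sum_sum_type, posEquiv_inl, posEquiv_inr_inl, posEquiv_inr_inr, add_assoc]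

lemma forall_fin_succ_iff_regions (hk : k ≤ n) {P : Fin (n + 1) → Prop} :
    (∀ x, P x) ↔ (∀ a, P (posL hk a)) ∧ P (posM hk) ∧ ∀ c, P (posR hk c) := by
  rw [← (posEquiv hk).forall_congr_right]
  simp [posEquiv_inl, posEquiv_inr_inl, posEquiv_inr_inr]

lemma mem_avoid231 {N : ℕ} {π : Perm (Fin N)} :
    π ∈ avoid231 N ↔ ∀ i j l, i < j → j < l → ¬(π l < π i ∧ π i < π j) := by
  simp [avoid231]

lemma join_mem_avoid231 (hk : k ≤ n) {σ : Perm (Fin k)} {τ : Perm (Fin (n - k))}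
    (hσ : σ ∈ avoid231 k) (hτ : τ ∈ avoid231 (n - k)) : join hk σ τ ∈ avoid231 (n + 1) := by
  rw [mem_avoid231] at hσ hτ ⊢
  simpa [forall_fin_succ_iff_regions hk, Fin.le_last] using And.intro hσ hτ

section MaxPosition

variable {π : Perm (Fin (n + 1))} {i j : Fin (n + 1)}

lemma apply_lt_last_of_ne (hi : i ≠ π.symm (Fin.last n)) : π i < Fin.last n :=
  lt_of_le_of_ne (Fin.le_last _) fun h => hi (π.eq_symm_apply.2 h)

lemma apply_lt_apply_of_lt_of_lt (hπ : π ∈ avoid231 (n + 1)) (hi : i < π.symm (Fin.last n))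
    (hj : π.symm (Fin.last n) < j) : π i < π j := by
  -- otherwise `π i`, the maximum and `π j` form a 231
  refine lt_of_not_ge fun h => mem_avoid231.1 hπ i _ j hi hj ⟨?_, ?_⟩
  · exact lt_of_le_of_ne h (π.injective.ne (hi.trans hj).ne')
  · simpa using apply_lt_last_of_ne hi.ne

lemma val_apply_lt_of_lt (hπ : π ∈ avoid231 (n + 1)) (hi : i < π.symm (Fin.last n)) :
    (π i : ℕ) < π.symm (Fin.last n) := by
  have hmaps : Set.MapsTo π (Finset.Ici (π.symm (Fin.last n))) (Finset.Ioi (π i)) := by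
    intro j hj
    simp only [Finset.coe_Ici, Finset.coe_Ioi, Set.mem_Ici, Set.mem_Ioi] at hj ⊢
    rcases hj.eq_or_lt with rfl | hj
    · simpa using apply_lt_last_of_ne hi.ne
    · exact apply_lt_apply_of_lt_of_lt hπ hi hj
  have := Finset.card_le_card_of_injOn π hmaps π.injective.injOn
  simp only [Fin.card_Ici, Fin.card_Ioi] at this
  omega

lemma le_val_apply_of_lt (hπ : π ∈ avoid231 (n + 1)) (hj : π.symm (Fin.last n) < j) :
    (π.symm (Fin.last n) : ℕ) ≤ π j := by
  have hmaps : Set.MapsTo π (Finset.Iio (π.symm (Fin.last n))) (Finset.Iio (π j)) := by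
    intro i hi
    simp only [Finset.coe_Iio, Set.mem_Iio] at hi ⊢
    exact apply_lt_apply_of_lt_of_lt hπ hi hj
  simpa using Finset.card_le_card_of_injOn π hmaps π.injective.injOn

end MaxPosition

noncomputable def shiftPerm {m N : ℕ} (f : Fin m → Fin N) (hf : Function.Injective f) (c : ℕ)
    (hc : ∀ i, c ≤ f i ∧ (f i : ℕ) < c + m) : Perm (Fin m) :=
  Equiv.ofBijective (fun i => ⟨f i - c, by have := hc i; omega⟩)
    (Finite.injective_iff_bijective.mp fun i j hij => hf (Fin.ext (by
      have := hc i; have := hc j; have := congrArg Fin.val hij; dsimp only at this; omega)))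

lemma val_shiftPerm {m N : ℕ} {f : Fin m → Fin N} {hf : Function.Injective f} {c : ℕ}
    {hc : ∀ i, c ≤ f i ∧ (f i : ℕ) < c + m} (i : Fin m) :
    (shiftPerm f hf c hc i : ℕ) = f i - c :=
  rfl

lemma shiftPerm_mem_avoid231 {m N : ℕ} {π : Perm (Fin N)} (hπ : π ∈ avoid231 N)
    {g : Fin m → Fin N} (hg : StrictMono g) {c : ℕ}
    (hc : ∀ i, c ≤ π (g i) ∧ (π (g i) : ℕ) < c + m) :
    shiftPerm (π ∘ g) (π.injective.comp hg.injective) c hc ∈ avoid231 m := by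
  rw [mem_avoid231] at hπ ⊢
  intro i j l hij hjl h
  refine hπ _ _ _ (hg hij) (hg hjl) ?_
  simp only [Fin.lt_def, val_shiftPerm, Function.comp] at h
  have := hc i; have := hc j; have := hc l
  constructor <;> rw [Fin.lt_def] <;> omega

lemma exists_join_eq {π : Perm (Fin (n + 1))} (hπ : π ∈ avoid231 (n + 1)) :
    ∃ σ ∈ avoid231 (π.symm (Fin.last n)), ∃ τ ∈ avoid231 (n - π.symm (Fin.last n)),
      join (Fin.is_le _) σ τ = π := by
  set m := π.symm (Fin.last n)
  have hk := Fin.is_le m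
  have hL : ∀ a, 0 ≤ π (posL hk a) ∧ (π (posL hk a) : ℕ) < 0 + m := fun a =>
    ⟨Nat.zero_le _, by simpa using val_apply_lt_of_lt hπ (Fin.lt_def.2 a.isLt)⟩
  have hR : ∀ c, (m : ℕ) ≤ π (posR hk c) ∧ (π (posR hk c) : ℕ) < m + (n - m) := fun c => by
    have hc : m < posR hk c := Fin.lt_def.2 (by rw [val_posR]; omega)
    have := Fin.lt_def.1 (apply_lt_last_of_ne hc.ne')
    exact ⟨le_val_apply_of_lt hπ hc, by simp only [Fin.val_last] at this; omega⟩
  refine ⟨_, shiftPerm_mem_avoid231 hπ (posL_strictMono hk) hL,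
    _, shiftPerm_mem_avoid231 hπ (posR_strictMono hk) hR, Equiv.ext ?_⟩
  rw [forall_fin_succ_iff_regions hk]
  refine ⟨fun a => ?_, ?_, fun c => ?_⟩
  · exact Fin.ext (by simp [val_posL, val_shiftPerm])
  · rw [join_posM, show posM hk = m from rfl, Equiv.apply_symm_apply]
  · have := hR c
    rw [join_posR]
    exact Fin.ext (by rw [val_valR, val_shiftPerm, Function.comp_apply]; omega)

lemma join_injective (hk : k ≤ n) {σ σ' : Perm (Fin k)} {τ τ' : Perm (Fin (n - k))}
    (h : join hk σ τ = join hk σ' τ') : σ = σ' ∧ τ = τ' := by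
  refine ⟨Equiv.ext fun a => ?_, Equiv.ext fun c => ?_⟩
  · simpa [Fin.ext_iff, val_posL] using DFunLike.congr_fun h (posL hk a)
  · simpa [Fin.ext_iff, val_valR] using DFunLike.congr_fun h (posR hk c)

lemma sum_avoid231_succ {M : Type*} [AddCommMonoid M] (F : Perm (Fin (n + 1)) → M) :
    ∑ π ∈ avoid231 (n + 1), F π =
      ∑ k : Fin (n + 1), ∑ σ ∈ avoid231 k, ∑ τ ∈ avoid231 (n - k), F (join k.is_le σ τ) := by
  rw [← Finset.sum_fiberwise (avoid231 (n + 1)) fun π => π.symm (Fin.last n)]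
  refine Finset.sum_congr rfl fun k _ => ?_
  rw [← Finset.sum_product']
  symm
  refine Finset.sum_bij (fun p _ => join k.is_le p.1 p.2) ?_ ?_ ?_ fun _ _ => rfl
  · rintro ⟨σ, τ⟩ h
    rw [Finset.mem_product] at h
    simp only [Finset.mem_filter, join_mem_avoid231 _ h.1 h.2, join_symm_apply_last, true_and]
    rfl
  · rintro ⟨σ, τ⟩ _ ⟨σ', τ'⟩ _ h
    obtain ⟨rfl, rfl⟩ := join_injective _ h
    rfl
  · intro π hmem
    obtain ⟨hπ, rfl⟩ := Finset.mem_filter.1 hmem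
    obtain ⟨σ, hσ, τ, hτ, h⟩ := exists_join_eq hπ
    exact ⟨(σ, τ), Finset.mem_product.2 ⟨hσ, hτ⟩, h⟩

lemma sum_ite_val_eq_zero {M : Type*} [AddCommMonoid M] (m : ℕ) (x : M) :
    (∑ c : Fin m, if (c : ℕ) = 0 then x else 0) = if m = 0 then 0 else x := by
  cases m <;> simp [Fin.val_eq_zero_iff]

lemma sum_ite_eq_val_succ {M : Type*} [AddCommMonoid M] (m : ℕ) (x : M) :
    (∑ a : Fin m, if m = (a : ℕ) + 1 then x else 0) = if m = 0 then 0 else x := by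
  cases m with
  | zero => simp
  | succ m =>
    rw [Fintype.sum_eq_single (Fin.last m) fun a ha =>
      if_neg fun h => ha (Fin.ext (by rw [Fin.val_last]; omega))]
    simp

def numDes {N : ℕ} (π : Perm (Fin N)) : ℕ :=
  (Finset.univ.filter fun p : Fin N × Fin N => (p.2 : ℕ) = p.1 + 1 ∧ π p.2 < π p.1).card

def numAsc {N : ℕ} (π : Perm (Fin N)) : ℕ :=
  (Finset.univ.filter fun p : Fin N × Fin N => (p.2 : ℕ) = p.1 + 1 ∧ π p.1 < π p.2).card

def numHeadInv {N : ℕ} (π : Perm (Fin N)) : ℕ :=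
  (Finset.univ.filter fun p : Fin N × Fin N => (p.1 : ℕ) = 0 ∧ p.1 < p.2 ∧ π p.2 < π p.1).card

def numHeadNoninv {N : ℕ} (π : Perm (Fin N)) : ℕ :=
  (Finset.univ.filter fun p : Fin N × Fin N => (p.1 : ℕ) = 0 ∧ p.1 < p.2 ∧ π p.1 < π p.2).card

section JoinStatistics

variable {n k : ℕ} (hk : k ≤ n) (σ : Perm (Fin k)) (τ : Perm (Fin (n - k)))

lemma numDes_join :
    numDes (join hk σ τ) = numDes σ + numDes τ + if n - k = 0 then 0 else 1 := by
  simp only [numDes, Finset.card_filter, Fintype.sum_prod_type,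
    sum_fin_succ_eq_sum_regions hk]
  simp [-Finset.sum_boole, sum_ite_val_eq_zero]
  ring

lemma numAsc_join :
    numAsc (join hk σ τ) = numAsc σ + numAsc τ + if k = 0 then 0 else 1 := by
  simp only [numAsc, Finset.card_filter, Fintype.sum_prod_type,
    sum_fin_succ_eq_sum_regions hk]
  simp [-Finset.sum_boole, Finset.sum_add_distrib, sum_ite_eq_val_succ]
  ring

lemma numHeadInv_join :
    numHeadInv (join hk σ τ) = numHeadInv σ + (if k = 0 then 1 else 0) * (n - k) := by
  simp only [numHeadInv, Finset.card_filter, Fintype.sum_prod_type,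
    sum_fin_succ_eq_sum_regions hk]
  simp [-Finset.sum_boole, ite_mul]

lemma numHeadNoninv_join :
    numHeadNoninv (join hk σ τ) =
      numHeadNoninv σ + (if k = 0 then 0 else 1) * (n - k + 1) := by
  simp only [numHeadNoninv, Finset.card_filter, Fintype.sum_prod_type,
    sum_fin_succ_eq_sum_regions hk]
  simp [-Finset.sum_boole, Finset.sum_add_distrib, ite_mul, sum_ite_val_eq_zero]
  split_ifs <;> omega

lemma occ3d21_join : occ3d21 (join hk σ τ) = occ3d21 σ + occ3d21 τ + numDes τ := by
  simp only [occ3d21, numDes, Finset.card_filter, Fintype.sum_prod_type,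
    sum_fin_succ_eq_sum_regions hk]
  simp [-Finset.sum_boole]
  ring

lemma occ3d12_join : occ3d12 (join hk σ τ) = occ3d12 σ + occ3d12 τ + numAsc τ := by
  simp only [occ3d12, numAsc, Finset.card_filter, Fintype.sum_prod_type,
    sum_fin_succ_eq_sum_regions hk]
  simp [-Finset.sum_boole]
  ring

lemma occ32d1_join : occ32d1 (join hk σ τ) = occ32d1 σ + occ32d1 τ + numHeadInv τ := by
  simp only [occ32d1, numHeadInv, Finset.card_filter, Fintype.sum_prod_type,
    sum_fin_succ_eq_sum_regions hk]
  simp [-Finset.sum_boole]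
  ring

lemma occ31d2_join : occ31d2 (join hk σ τ) = occ31d2 σ + occ31d2 τ + numHeadNoninv τ := by
  simp only [occ31d2, numHeadNoninv, Finset.card_filter, Fintype.sum_prod_type,
    sum_fin_succ_eq_sum_regions hk]
  simp [-Finset.sum_boole]
  ring

lemma occ13d2_join :
    occ13d2 (join hk σ τ) = occ13d2 σ + occ13d2 τ + (if k = 0 then 0 else 1) * (n - k) := by
  simp only [occ13d2, Finset.card_filter, Fintype.sum_prod_type,
    sum_fin_succ_eq_sum_regions hk]
  simp [-Finset.sum_boole, Finset.sum_add_distrib, ite_mul, sum_ite_eq_val_succ]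
  ring

lemma occ1d32_join : occ1d32 (join hk σ τ) =
    occ1d32 σ + occ1d32 τ + k * (numDes τ + if n - k = 0 then 0 else 1) := by
  simp only [occ1d32, numDes, Finset.card_filter, Fintype.sum_prod_type,
    sum_fin_succ_eq_sum_regions hk]
  simp [-Finset.sum_boole, Finset.sum_add_distrib, sum_ite_val_eq_zero]
  split_ifs <;> ring

end JoinStatistics

noncomputable def avoidGF (w : (N : ℕ) → Perm (Fin N) → ℚ) : ℚ⟦X⟧ :=
  PowerSeries.mk fun N => ∑ π ∈ avoid231 N, w N π

lemma coeff_avoidGF (w : (N : ℕ) → Perm (Fin N) → ℚ) (N : ℕ) :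
    coeff N (avoidGF w) = ∑ π ∈ avoid231 N, w N π :=
  coeff_mk _ _

lemma avoidGF_zero : avoidGF 0 = 0 := by
  ext; simp [coeff_avoidGF]

lemma avoidGF_add (w₁ w₂ : (N : ℕ) → Perm (Fin N) → ℚ) :
    avoidGF (fun N π => w₁ N π + w₂ N π) = avoidGF w₁ + avoidGF w₂ := by
  ext; simp [coeff_avoidGF, Finset.sum_add_distrib]

lemma avoid231_zero : avoid231 0 = {1} := by
  ext π; simp [avoid231, Subsingleton.elim π 1]

lemma coeff_avoidGF_mul (u v : (N : ℕ) → Perm (Fin N) → ℚ) (n : ℕ) :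
    coeff n (avoidGF u * avoidGF v) =
      ∑ k : Fin (n + 1), (∑ σ ∈ avoid231 k, u k σ) * ∑ τ ∈ avoid231 (n - k), v (n - k) τ := by
  rw [coeff_mul, Finset.Nat.sum_antidiagonal_eq_sum_range_succ_mk,
    ← Fin.sum_univ_eq_sum_range (fun k => coeff k (avoidGF u) * coeff (n - k) (avoidGF v))]
  simp [coeff_avoidGF]

theorem avoidGF_eq_of_join {w u v p q : (N : ℕ) → Perm (Fin N) → ℚ}
    (h : ∀ n k (hk : k ≤ n) σ τ,
      w (n + 1) (join hk σ τ) = u k σ + v (n - k) τ + p k σ * q (n - k) τ) :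
    avoidGF w = C (w 0 1) +
      X * (avoidGF u * avoidGF 1 + avoidGF 1 * avoidGF v + avoidGF p * avoidGF q) := by
  ext N
  cases N with
  | zero => simp [coeff_avoidGF, avoid231_zero]
  | succ n =>
    rw [map_add, coeff_C, if_neg n.succ_ne_zero, zero_add, coeff_succ_X_mul, coeff_avoidGF,
      sum_avoid231_succ]
    simp only [h, map_add, coeff_avoidGF_mul, ← Finset.sum_add_distrib]
    refine Finset.sum_congr rfl fun k _ => ?_
    simp only [Finset.sum_add_distrib, Finset.sum_mul_sum, Pi.one_apply, mul_one, one_mul]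

theorem avoidGF_eq_X_mul_of_join {w u v p q : (N : ℕ) → Perm (Fin N) → ℚ} (h0 : w 0 1 = 0)
    (h : ∀ n k (hk : k ≤ n) σ τ,
      w (n + 1) (join hk σ τ) = u k σ + v (n - k) τ + p k σ * q (n - k) τ) :
    avoidGF w = X * (avoidGF u * avoidGF 1 + avoidGF 1 * avoidGF v + avoidGF p * avoidGF q) := by
  simpa [h0] using avoidGF_eq_of_join h

lemma avoidGF_one : avoidGF 1 = Cq := by
  refine PowerSeries.eq_of_eq_one_add_X_mul_sq ?_ Cq_eq_one_add_X_mul_sq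
  have h := avoidGF_eq_of_join (w := 1) (u := 0) (v := 0) (p := 1) (q := 1)
    fun _ _ _ _ _ => by simp
  simpa [avoidGF_zero, sq] using h

lemma card_avoid231 (N : ℕ) : (avoid231 N).card = catalan N := by
  have := congrArg (coeff N) avoidGF_one
  simp only [coeff_avoidGF, Pi.one_apply, Finset.sum_const, nsmul_eq_mul, mul_one, Cq,
    coeff_mk] at this
  exact_mod_cast this

lemma avoidGF_succ_size : avoidGF (fun N _ => N + 1) = Bq := by
  ext N
  simp only [coeff_avoidGF, Finset.sum_const, card_avoid231, nsmul_eq_mul, Bq, coeff_mk]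
  rw [← Nat.centralBinom_eq_two_mul_choose, ← succ_mul_catalan_eq_centralBinom]
  push_cast; ring

lemma Bq_mul_eq_one : Bq * (1 - 2 * X * Cq) = 1 := by
  have h := avoidGF_eq_of_join (w := fun N _ => N + 1) (u := fun N _ => N + 1)
    (v := fun N _ => N + 1) (p := 0) (q := 0) fun n k hk _ _ => by
      simp only [Nat.cast_sub hk, Pi.zero_apply]; push_cast; ring
  rw [avoidGF_succ_size, avoidGF_one, avoidGF_zero, Nat.cast_zero, zero_add, map_one] at h
  linear_combination h

lemma avoidGF_size : avoidGF (fun N _ => N) = Bq - Cq := by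
  rw [← avoidGF_succ_size, ← avoidGF_one, eq_sub_iff_add_eq, ← avoidGF_add]
  rfl

lemma avoidGF_nonempty : avoidGF (fun N _ => if N = 0 then 0 else 1) = Cq - 1 := by
  have h := avoidGF_eq_X_mul_of_join (w := fun N _ => if N = 0 then 0 else 1) (u := 0) (v := 0)
    (p := 1) (q := 1) rfl fun _ _ _ _ _ => by simp
  rw [avoidGF_one, avoidGF_zero] at h
  linear_combination h - Cq_eq_one_add_X_mul_sq

lemma avoidGF_empty : avoidGF (fun N _ => if N = 0 then 1 else 0) = 1 := by
  have h := avoidGF_eq_of_join (w := fun N _ => if N = 0 then 1 else 0) (u := 0) (v := 0)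
    (p := 0) (q := 0) fun _ _ _ _ _ => by simp
  simpa [avoidGF_zero] using h

lemma Bq_sub_Cq_eq : Bq - Cq = X * Bq * Cq ^ 2 := by
  linear_combination Cq * Bq_mul_eq_one - Bq * Cq_eq_one_add_X_mul_sq

lemma eq_X_mul_Bq_mul {S R : ℚ⟦X⟧} (h : S = X * (S * Cq + Cq * S + R)) : S = X * Bq * R := by
  linear_combination (-S) * Bq_mul_eq_one + Bq * h

lemma eq_X_mul_Cq_mul {S R : ℚ⟦X⟧} (h : S = X * (S * Cq + R)) : S = X * Cq * R := by
  linear_combination (-S) * Cq_eq_one_add_X_mul_sq + Cq * h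

lemma avoidGF_numDes : avoidGF (fun _ π => numDes π) = X ^ 2 * Bq * Cq ^ 3 := by
  have h := avoidGF_eq_X_mul_of_join (w := fun _ π => numDes π) (by simp [numDes])
    (u := fun _ π => numDes π) (v := fun _ π => numDes π) (p := 1)
    (q := fun N _ => if N = 0 then 0 else 1) fun n k hk σ τ => by
      push_cast [Pi.one_apply, numDes_join hk σ τ]; ring
  rw [avoidGF_one, avoidGF_nonempty] at h
  rw [eq_X_mul_Bq_mul h]
  linear_combination X * Bq * Cq * Cq_eq_one_add_X_mul_sq

lemma avoidGF_numAsc : avoidGF (fun _ π => numAsc π) = X ^ 2 * Bq * Cq ^ 3 := by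
  have h := avoidGF_eq_X_mul_of_join (w := fun _ π => numAsc π) (by simp [numAsc])
    (u := fun _ π => numAsc π) (v := fun _ π => numAsc π)
    (p := fun N _ => if N = 0 then 0 else 1) (q := 1) fun n k hk σ τ => by
      push_cast [Pi.one_apply, numAsc_join hk σ τ]; ring
  rw [avoidGF_one, avoidGF_nonempty] at h
  rw [eq_X_mul_Bq_mul h]
  linear_combination X * Bq * Cq * Cq_eq_one_add_X_mul_sq

lemma avoidGF_numHeadInv : avoidGF (fun _ π => numHeadInv π) = X ^ 2 * Bq * Cq ^ 3 := by
  have h := avoidGF_eq_X_mul_of_join (w := fun _ π => numHeadInv π) (by simp [numHeadInv])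
    (u := fun _ π => numHeadInv π) (v := 0)
    (p := fun N _ => if N = 0 then 1 else 0) (q := fun N _ => N) fun n k hk σ τ => by
      push_cast [Pi.zero_apply, numHeadInv_join hk σ τ]; ring
  rw [avoidGF_zero, avoidGF_one, avoidGF_empty, avoidGF_size, mul_zero, add_zero, one_mul] at h
  rw [eq_X_mul_Cq_mul h]
  linear_combination X * Cq * Bq_sub_Cq_eq

lemma avoidGF_numHeadNoninv : avoidGF (fun _ π => numHeadNoninv π) = X ^ 2 * Bq * Cq ^ 3 := by
  have h := avoidGF_eq_X_mul_of_join (w := fun _ π => numHeadNoninv π) (by simp [numHeadNoninv])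
    (u := fun _ π => numHeadNoninv π) (v := 0)
    (p := fun N _ => if N = 0 then 0 else 1) (q := fun N _ => N + 1) fun n k hk σ τ => by
      push_cast [Pi.zero_apply, numHeadNoninv_join hk σ τ, Nat.cast_sub hk]; ring
  rw [avoidGF_zero, avoidGF_one, avoidGF_nonempty, avoidGF_succ_size, mul_zero, add_zero] at h
  rw [eq_X_mul_Cq_mul h]
  linear_combination X * Bq * Cq * Cq_eq_one_add_X_mul_sq

lemma avoidGF_eq_of_join_eq_add_add {w t : (N : ℕ) → Perm (Fin N) → ℚ} (h0 : w 0 1 = 0)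
    (h : ∀ n k (hk : k ≤ n) σ τ, w (n + 1) (join hk σ τ) = w k σ + w (n - k) τ + t (n - k) τ)
    (ht : avoidGF t = X ^ 2 * Bq * Cq ^ 3) : avoidGF w = X ^ 3 * Bq ^ 2 * Cq ^ 4 := by
  have hw := avoidGF_eq_X_mul_of_join (u := w) (v := w) (p := 1) (q := t) h0
    fun n k hk σ τ => by simp only [h, Pi.one_apply, one_mul]
  rw [avoidGF_one, ht] at hw
  rw [eq_X_mul_Bq_mul hw]
  ring

lemma avoidGF_occ3d21 : avoidGF (fun _ π => occ3d21 π) = X ^ 3 * Bq ^ 2 * Cq ^ 4 :=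
  avoidGF_eq_of_join_eq_add_add (by simp [occ3d21])
    (fun _ _ hk σ τ => by exact_mod_cast occ3d21_join hk σ τ) avoidGF_numDes

lemma avoidGF_occ3d12 : avoidGF (fun _ π => occ3d12 π) = X ^ 3 * Bq ^ 2 * Cq ^ 4 :=
  avoidGF_eq_of_join_eq_add_add (by simp [occ3d12])
    (fun _ _ hk σ τ => by exact_mod_cast occ3d12_join hk σ τ) avoidGF_numAsc

lemma avoidGF_occ32d1 : avoidGF (fun _ π => occ32d1 π) = X ^ 3 * Bq ^ 2 * Cq ^ 4 :=
  avoidGF_eq_of_join_eq_add_add (by simp [occ32d1])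
    (fun _ _ hk σ τ => by exact_mod_cast occ32d1_join hk σ τ) avoidGF_numHeadInv

lemma avoidGF_occ31d2 : avoidGF (fun _ π => occ31d2 π) = X ^ 3 * Bq ^ 2 * Cq ^ 4 :=
  avoidGF_eq_of_join_eq_add_add (by simp [occ31d2])
    (fun _ _ hk σ τ => by exact_mod_cast occ31d2_join hk σ τ) avoidGF_numHeadNoninv

lemma avoidGF_occ13d2 : avoidGF (fun _ π => occ13d2 π) = X ^ 3 * Bq ^ 2 * Cq ^ 4 := by
  have h := avoidGF_eq_X_mul_of_join (w := fun _ π => occ13d2 π) (by simp [occ13d2])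
    (u := fun _ π => occ13d2 π) (v := fun _ π => occ13d2 π)
    (p := fun N _ => if N = 0 then 0 else 1) (q := fun N _ => N) fun n k hk σ τ => by
      push_cast [occ13d2_join hk σ τ]; ring
  rw [avoidGF_one, avoidGF_nonempty, avoidGF_size] at h
  rw [eq_X_mul_Bq_mul h]
  linear_combination X * Bq * (Bq - Cq) * Cq_eq_one_add_X_mul_sq
    + X ^ 2 * Bq * Cq ^ 2 * Bq_sub_Cq_eq

lemma avoidGF_occ1d32 : avoidGF (fun _ π => occ1d32 π) = X ^ 3 * Bq ^ 3 * Cq ^ 3 := by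
  have h := avoidGF_eq_X_mul_of_join (w := fun _ π => occ1d32 π) (by simp [occ1d32])
    (u := fun _ π => occ1d32 π) (v := fun _ π => occ1d32 π)
    (p := fun N _ => N) (q := fun N π => numDes π + if N = 0 then 0 else 1)
    fun n k hk σ τ => by push_cast [occ1d32_join hk σ τ]; ring
  rw [avoidGF_one, avoidGF_size, avoidGF_add, avoidGF_numDes, avoidGF_nonempty] at h
  rw [eq_X_mul_Bq_mul h]
  linear_combination
    (X ^ 2 * Bq * Cq ^ 2 * (X * Bq * Cq + 1) - X ^ 3 * Bq ^ 2 * Cq ^ 3) * Bq_sub_Cq_eq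
      + X * Bq * (Bq - Cq) * Cq_eq_one_add_X_mul_sq

lemma mk_natCast_sum_eq_avoidGF (f : (N : ℕ) → Perm (Fin N) → ℕ) :
    PowerSeries.mk (fun N => ((∑ π ∈ avoid231 N, f N π : ℕ) : ℚ)) =
      avoidGF fun N π => f N π := by
  ext; simp [coeff_avoidGF]

end Avoid231

/-- Over 2-3-1-avoiding permutations, the generating functions of the total numbers of
occurrences of 3-21, 3-12, 32-1, 31-2 and 13-2 are all `z³B²C⁴`, and that of 1-32 is
`z³B³C³`. -/
theorem gf_vincular_patterns_on_avoid231 :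
    PowerSeries.mk (fun n => ((∑ π ∈ avoid231 n, occ3d21 π : ℕ) : ℚ)) =
      PowerSeries.X ^ 3 * Bq ^ 2 * Cq ^ 4 ∧
    PowerSeries.mk (fun n => ((∑ π ∈ avoid231 n, occ3d12 π : ℕ) : ℚ)) =
      PowerSeries.X ^ 3 * Bq ^ 2 * Cq ^ 4 ∧
    PowerSeries.mk (fun n => ((∑ π ∈ avoid231 n, occ32d1 π : ℕ) : ℚ)) =
      PowerSeries.X ^ 3 * Bq ^ 2 * Cq ^ 4 ∧
    PowerSeries.mk (fun n => ((∑ π ∈ avoid231 n, occ31d2 π : ℕ) : ℚ)) =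
      PowerSeries.X ^ 3 * Bq ^ 2 * Cq ^ 4 ∧
    PowerSeries.mk (fun n => ((∑ π ∈ avoid231 n, occ13d2 π : ℕ) : ℚ)) =
      PowerSeries.X ^ 3 * Bq ^ 2 * Cq ^ 4 ∧
    PowerSeries.mk (fun n => ((∑ π ∈ avoid231 n, occ1d32 π : ℕ) : ℚ)) =
      PowerSeries.X ^ 3 * Bq ^ 3 * Cq ^ 3 := by
  open Avoid231 in
  exact ⟨(mk_natCast_sum_eq_avoidGF _).trans avoidGF_occ3d21,
    (mk_natCast_sum_eq_avoidGF _).trans avoidGF_occ3d12,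
    (mk_natCast_sum_eq_avoidGF _).trans avoidGF_occ32d1,
    (mk_natCast_sum_eq_avoidGF _).trans avoidGF_occ31d2,
    (mk_natCast_sum_eq_avoidGF _).trans avoidGF_occ13d2,
    (mk_natCast_sum_eq_avoidGF _).trans avoidGF_occ1d32⟩
end
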